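/- arXiv:2403.01174 — 3 statements merged into one kernel-verified Lean document; each statement's English description precedes it below -/
import Mathlib

section
/- Let R and S be real symmetric n×n matrices, let σ² > 0, and set Q = R + σ²S. Suppose Q is positive definite and R is positive semidefinite and singular (i.e., 0 is an eigenvalue of R). Then the largest eigenvalue of Q⁻¹S equals 1/σ²: (i) there exists a nonzero vector v ∈ ℝⁿ with σ² S v = Q v, and (ii) for every real number μ and every nonzero v ∈ ℝⁿ with S v = μ Q v, one has μ ≤ 1/σ². In particular σ² = 1/λ_max(Q⁻¹S). -/
open Matrix

/-!
Testing a generalized eigenvector `S v = μ Q v` of `Q = R + σ² S` against `v` gives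
`vᵀRv = (1 - σ²μ) vᵀQv`; since `vᵀRv ≥ 0` and `vᵀQv > 0` this forces `σ²μ ≤ 1`.
The bound is attained at any null vector of `R`, on which `Q` acts as `σ² S`.
-/

namespace Matrix

variable {ι α : Type*} [Fintype ι]

theorem add_smul_mulVec_of_mulVec_eq_zero [CommRing α] {R S : Matrix ι ι α} {v : ι → α}
    (hRv : R *ᵥ v = 0) (c : α) : (R + c • S) *ᵥ v = c • S *ᵥ v := by
  rw [add_mulVec, hRv, zero_add, smul_mulVec]

theorem dotProduct_mulVec_eq_of_mulVec_eq_smul_add_smul [CommRing α]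
    {R S : Matrix ι ι α} {v : ι → α} {c μ : α} (hSv : S *ᵥ v = μ • (R + c • S) *ᵥ v) :
    v ⬝ᵥ R *ᵥ v = (1 - c * μ) * (v ⬝ᵥ (R + c • S) *ᵥ v) := by
  have hQ : v ⬝ᵥ (R + c • S) *ᵥ v = v ⬝ᵥ R *ᵥ v + c * (μ * (v ⬝ᵥ (R + c • S) *ᵥ v)) := by
    conv_lhs => rw [add_mulVec, dotProduct_add, smul_mulVec, hSv, dotProduct_smul,
      dotProduct_smul, smul_eq_mul, smul_eq_mul]
  linear_combination -hQ

theorem mul_le_one_of_mulVec_eq_smul_add_smul {R S : Matrix ι ι ℝ} {v : ι → ℝ} {c μ : ℝ}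
    (hRpsd : R.PosSemidef) (hQpd : (R + c • S).PosDef) (hv : v ≠ 0)
    (hSv : S *ᵥ v = μ • (R + c • S) *ᵥ v) : c * μ ≤ 1 := by
  have hQv : 0 < v ⬝ᵥ (R + c • S) *ᵥ v := by simpa using hQpd.dotProduct_mulVec_pos hv
  have hRv : 0 ≤ v ⬝ᵥ R *ᵥ v := by simpa using hRpsd.dotProduct_mulVec_nonneg v
  rw [dotProduct_mulVec_eq_of_mulVec_eq_smul_add_smul hSv] at hRv
  have := nonneg_of_mul_nonneg_left hRv hQv
  linarith

end Matrix

theorem stmt1_general (n : ℕ) (R S : Matrix (Fin n) (Fin n) ℝ)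
    (σ2 : ℝ) (hσ2 : 0 < σ2)
    (Q : Matrix (Fin n) (Fin n) ℝ) (hQ : Q = R + σ2 • S)
    (hQpd : Q.PosDef) (hRpsd : R.PosSemidef)
    (hRsing : ∃ v : Fin n → ℝ, v ≠ 0 ∧ R.mulVec v = 0) :
    (∃ v : Fin n → ℝ, v ≠ 0 ∧ σ2 • S.mulVec v = Q.mulVec v) ∧
    (∀ (μ : ℝ) (v : Fin n → ℝ), v ≠ 0 → S.mulVec v = μ • Q.mulVec v → μ ≤ 1 / σ2) := by
  subst hQ
  refine ⟨?_, fun μ v hv hSv => ?_⟩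
  · obtain ⟨v, hv, hRv⟩ := hRsing
    exact ⟨v, hv, (add_smul_mulVec_of_mulVec_eq_zero hRv σ2).symm⟩
  · rw [le_div_iff₀ hσ2, mul_comm]
    exact mul_le_one_of_mulVec_eq_smul_add_smul hRpsd hQpd hv hSv

/-- If `Q = R + σ²S` is positive definite, `R` is symmetric positive semidefinite and
singular, and `S` is symmetric, then the largest eigenvalue of `Q⁻¹S` equals `1/σ²`. -/
theorem stmt1 (n : ℕ) (R S : Matrix (Fin n) (Fin n) ℝ)
    (hRsymm : R.IsSymm) (hSsymm : S.IsSymm)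
    (σ2 : ℝ) (hσ2 : 0 < σ2)
    (Q : Matrix (Fin n) (Fin n) ℝ) (hQ : Q = R + σ2 • S)
    (hQpd : Q.PosDef) (hRpsd : R.PosSemidef)
    (hRsing : ∃ v : Fin n → ℝ, v ≠ 0 ∧ R.mulVec v = 0) :
    (∃ v : Fin n → ℝ, v ≠ 0 ∧ σ2 • S.mulVec v = Q.mulVec v) ∧
    (∀ (μ : ℝ) (v : Fin n → ℝ), v ≠ 0 → S.mulVec v = μ • Q.mulVec v → μ ≤ 1 / σ2) :=
  stmt1_general n R S σ2 hσ2 Q hQ hQpd hRpsd hRsing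
end

section
/- Let (y_i^h)_{i≥1} ⊂ ℝ³ and (z_i^{ho})_{i≥1} ⊂ ℝ³ be deterministic sequences with ‖y_i^h‖ ≤ C_y and ‖z_i^{ho}‖ ≤ C_z for all i, and let (ε_i)_{i≥1} be independent ℝ²-valued random vectors with E[ε_i] = 0, E[ε_i ε_iᵀ] = σ² I₂, and E‖ε_i‖⁴ ≤ κ < ∞. Set ε_i^h = (ε_{i1}, ε_{i2}, 0)ᵀ, z_i^h = z_i^{ho} + ε_i^h, L_i = y_i^{h⊤} ⊗ I₃ ∈ ℝ^{3×9}, Q_m = (1/m) ∑_{i=1}^m L_iᵀ z_i^h z_i^{h⊤} L_i, Q_m^o = (1/m) ∑_{i=1}^m L_iᵀ z_i^{ho} z_i^{ho⊤} L_i, and S̃_m = (1/m) ∑_{i=1}^m (y_i^h y_i^{h⊤}) ⊗ D with D = diag(1,1,0). Then Q_m = Q_m^o + σ² S̃_m + O_p(1/√m); that is, for every ε > 0 there exists a finite N such that for all m, P(‖Q_m − Q_m^o − σ² S̃_m‖_F > N/√m) < ε. -/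
/-!
Entrywise, `Q_m` is the average of the independent variables `y_i(j) y_i(j') z_i^h(k) z_i^h(k')`.
Since the padded noise `ε_i^h` has mean zero and covariance `σ² D`, each of them has mean equal to
the corresponding entry of `Q_m^o + σ² S̃_m`, and its variance is bounded by `C_y⁴ · 8 (C_z⁴ + κ)`
because `E‖ε_i‖⁴ ≤ κ`. Hence every entry of `Q_m` has variance `O(1/m)`, and Markov's inequality
for the squared Frobenius norm of `Q_m - E Q_m` gives the `O_p(1/√m)` bound.
-/

open MeasureTheory ProbabilityTheory Matrix

section Moments

variable {Ω : Type*} [MeasurableSpace Ω] {μ : Measure Ω}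

theorem memLp_two_of_sq_le {f g : Ω → ℝ} (hf : AEStronglyMeasurable f μ) (hg : Integrable g μ)
    (hfg : ∀ ω, f ω ^ 2 ≤ g ω) : MemLp f 2 μ :=
  (memLp_two_iff_integrable_sq hf).2 <| hg.mono' (hf.pow 2) <| ae_of_all _ fun ω => by
    simpa [abs_of_nonneg (sq_nonneg (f ω))] using hfg ω

theorem variance_average_le {X : ℕ → Ω → ℝ} (hX : ∀ i, MemLp (X i) 2 μ)
    (hindep : Pairwise fun i j => IndepFun (X i) (X j) μ) {B : ℝ}
    (hB : ∀ i, variance (X i) μ ≤ B) (m : ℕ) :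
    variance (fun ω => (m : ℝ)⁻¹ * ∑ i ∈ Finset.range m, X i ω) μ ≤ B / m := by
  have hsum : variance (∑ i ∈ Finset.range m, X i) μ = ∑ i ∈ Finset.range m, variance (X i) μ :=
    IndepFun.variance_sum (fun i _ => hX i) fun i _ j _ hij => hindep hij
  simp only [← Finset.sum_apply]
  rw [variance_const_mul, hsum]
  calc ((m : ℝ)⁻¹) ^ 2 * ∑ i ∈ Finset.range m, variance (X i) μ
      ≤ ((m : ℝ)⁻¹) ^ 2 * (m * B) := by
        gcongr
        simpa using Finset.sum_le_sum fun i (_ : i ∈ Finset.range m) => hB i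
    _ = B / m := by
        rcases eq_or_ne (m : ℝ) 0 with hm | hm
        · simp [hm]
        · field_simp

theorem measure_lt_sqrt_sum_sq_sub_integral_le {κ κ' : Type*} [Fintype κ] [Fintype κ']
    [IsFiniteMeasure μ] {X : Ω → Matrix κ κ' ℝ} (hX : ∀ p q, MemLp (fun ω => X ω p q) 2 μ)
    {t : ℝ} (ht : 0 < t) :
    μ {ω | t < √(∑ p, ∑ q, (X ω p q - ∫ ω', X ω' p q ∂μ) ^ 2)} ≤
      ENNReal.ofReal ((∑ p, ∑ q, variance (fun ω => X ω p q) μ) / t ^ 2) := by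
  have hsq : ∀ p q, Integrable (fun ω => (X ω p q - ∫ ω', X ω' p q ∂μ) ^ 2) μ :=
    fun p q => ((hX p q).sub (memLp_const _)).integrable_sq
  set G : Ω → ℝ := fun ω => ∑ p, ∑ q, (X ω p q - ∫ ω', X ω' p q ∂μ) ^ 2
  have hG : Integrable G μ :=
    integrable_finsetSum _ fun p _ => integrable_finsetSum _ fun q _ => hsq p q
  have hGint : ∫ ω, G ω ∂μ = ∑ p, ∑ q, variance (fun ω => X ω p q) μ := by
    rw [integral_finsetSum _ fun p _ => integrable_finsetSum _ fun q _ => hsq p q]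
    refine Finset.sum_congr rfl fun p _ => ?_
    rw [integral_finsetSum _ fun q _ => hsq p q]
    exact Finset.sum_congr rfl fun q _ => (variance_eq_integral (hX p q).aemeasurable).symm
  have markov := mul_meas_ge_le_integral_of_nonneg (ae_of_all _ fun ω => by positivity) hG (t ^ 2)
  calc μ {ω | t < √(G ω)} ≤ μ {ω | t ^ 2 ≤ G ω} :=
        measure_mono fun ω hω => ((Real.lt_sqrt ht.le).1 hω).le
    _ = ENNReal.ofReal (μ.real {ω | t ^ 2 ≤ G ω}) := (ofReal_measureReal).symm
    _ ≤ _ := ENNReal.ofReal_le_ofReal <| by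
        rw [le_div_iff₀ (by positivity), ← hGint]
        linarith

theorem exists_measure_lt_sqrt_sum_sq_sub_integral_lt {κ κ' : Type*} [Fintype κ] [Fintype κ']
    [IsFiniteMeasure μ] {X : ℕ → Ω → Matrix κ κ' ℝ} (hX : ∀ m p q, MemLp (fun ω => X m ω p q) 2 μ)
    {B : ℝ} (hB : ∀ m p q, variance (fun ω => X m ω p q) μ ≤ B / m) {e : ℝ} (he : 0 < e) :
    ∃ N : ℝ, ∀ m : ℕ, 0 < m →
      μ {ω | N / √m < √(∑ p, ∑ q, (X m ω p q - ∫ ω', X m ω' p q ∂μ) ^ 2)} <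
        ENNReal.ofReal e := by
  set C : ℝ := Fintype.card κ * Fintype.card κ' * |B|
  refine ⟨√(C / e + 1), fun m hm => ?_⟩
  have hm' : (0 : ℝ) < m := by exact_mod_cast hm
  have hC : 0 ≤ C := by positivity
  refine (measure_lt_sqrt_sum_sq_sub_integral_le (hX m) (by positivity)).trans_lt ?_
  rw [ENNReal.ofReal_lt_ofReal_iff he, div_pow, Real.sq_sqrt hm'.le, Real.sq_sqrt (by positivity)]
  have hsum : ∑ p, ∑ q, variance (fun ω => X m ω p q) μ ≤ C / m :=
    calc _ ≤ ∑ _p : κ, ∑ _q : κ', |B| / m := Finset.sum_le_sum fun p _ => Finset.sum_le_sum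
          fun q _ => (hB m p q).trans (div_le_div_of_nonneg_right (le_abs_self B) hm'.le)
      _ = C / m := by simp only [Finset.sum_const, Finset.card_univ, nsmul_eq_mul, C]; ring
  calc _ ≤ C / m / ((C / e + 1) / m) := by gcongr
    _ = C / (C / e + 1) := by field_simp
    _ < e := by
        rw [div_lt_iff₀ (by positivity), mul_add, mul_div_cancel₀ _ he.ne']
        linarith

end Moments

theorem sq_apply_le_dotProduct_self {n : Type*} [Fintype n] (v : n → ℝ) (a : n) :
    v a ^ 2 ≤ v ⬝ᵥ v := by
  simpa [dotProduct, sq] using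
    Finset.single_le_sum (fun j _ => mul_self_nonneg (v j)) (Finset.mem_univ a)

theorem sq_add_apply_mul_add_apply_le {n : Type*} [Fintype n] (z w : n → ℝ) (a b : n) :
    ((z + w) a * (z + w) b) ^ 2 ≤ 8 * ((z ⬝ᵥ z) ^ 2 + (w ⬝ᵥ w) ^ 2) := by
  have hu : ∀ c, ((z + w) c) ^ 2 ≤ 2 * (z ⬝ᵥ z + w ⬝ᵥ w) := fun c => by
    have := sq_apply_le_dotProduct_self z c
    have := sq_apply_le_dotProduct_self w c
    simp only [Pi.add_apply]
    nlinarith [sq_nonneg (z c - w c)]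
  have ha := hu a
  have hb := hu b
  calc ((z + w) a * (z + w) b) ^ 2 = (z + w) a ^ 2 * (z + w) b ^ 2 := mul_pow _ _ 2
    _ ≤ (2 * (z ⬝ᵥ z + w ⬝ᵥ w)) * (2 * (z ⬝ᵥ z + w ⬝ᵥ w)) :=
        mul_le_mul ha hb (sq_nonneg _) ((sq_nonneg _).trans ha)
    _ ≤ 8 * ((z ⬝ᵥ z) ^ 2 + (w ⬝ᵥ w) ^ 2) := by nlinarith [sq_nonneg (z ⬝ᵥ z - w ⬝ᵥ w)]

def extendZero (v : Fin 2 → ℝ) : Fin 3 → ℝ := ![v 0, v 1, 0]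

@[fun_prop]
theorem measurable_extendZero : Measurable extendZero :=
  measurable_pi_iff.2 fun a => by fin_cases a <;> simp [extendZero] <;> fun_prop

theorem dotProduct_self_extendZero (v : Fin 2 → ℝ) :
    extendZero v ⬝ᵥ extendZero v = v ⬝ᵥ v := by
  simp [extendZero, dotProduct, Fin.sum_univ_succ]

theorem sq_dotProduct_self_le_of_sqrt_le {n : Type*} [Fintype n] {v : n → ℝ} {C : ℝ}
    (hv : √(v ⬝ᵥ v) ≤ C) : (v ⬝ᵥ v) ^ 2 ≤ C ^ 4 := by
  simpa only [← pow_mul] using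
    pow_le_pow_left₀ (Fintype.sum_nonneg fun _ => mul_self_nonneg _) (Real.sqrt_le_iff.1 hv).2 2

theorem sq_mul_apply_le_of_sqrt_dotProduct_self_le {n : Type*} [Fintype n] {v : n → ℝ} {C : ℝ}
    (hv : √(v ⬝ᵥ v) ≤ C) (a b : n) : (v a * v b) ^ 2 ≤ C ^ 4 := by
  have hva := (sq_apply_le_dotProduct_self v a).trans (Real.sqrt_le_iff.1 hv).2
  have hvb := (sq_apply_le_dotProduct_self v b).trans (Real.sqrt_le_iff.1 hv).2
  calc (v a * v b) ^ 2 = v a ^ 2 * v b ^ 2 := mul_pow _ _ 2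
    _ ≤ C ^ 2 * C ^ 2 := mul_le_mul hva hvb (sq_nonneg _) ((sq_nonneg _).trans hva)
    _ = C ^ 4 := by ring

/-- The `(p, q)` entry of `Lᵀ z zᵀ L` for `L = yᵀ ⊗ I`, since `(Lᵀ z)_{(j,k)} = y j * z k`. -/
def kronOuterEntry {n : Type*} (y z : n → ℝ) (p q : n × n) : ℝ := y p.1 * z p.2 * (y q.1 * z q.2)

theorem kronOuterEntry_eq {n : Type*} (y z : n → ℝ) (p q : n × n) :
    kronOuterEntry y z p q = y p.1 * y q.1 * (z p.2 * z q.2) := by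
  rw [kronOuterEntry]; ring

section Noise

variable {Ω : Type*} [MeasurableSpace Ω] {μ : Measure Ω} {ε : Ω → Fin 2 → ℝ}

theorem integral_extendZero (hmean : ∀ a, ∫ ω, ε ω a ∂μ = 0) (a : Fin 3) :
    ∫ ω, extendZero (ε ω) a ∂μ = 0 := by
  fin_cases a <;> simp [extendZero, hmean]

theorem integral_extendZero_mul_extendZero {σ2 : ℝ}
    (hcov : ∀ a b, ∫ ω, ε ω a * ε ω b ∂μ = σ2 * (if a = b then 1 else 0)) (a b : Fin 3) :
    ∫ ω, extendZero (ε ω) a * extendZero (ε ω) b ∂μ = σ2 * diagonal ![1, 1, 0] a b := by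
  fin_cases a <;> fin_cases b <;> simp [extendZero, hcov]

theorem memLp_extendZero_apply [IsFiniteMeasure μ] (hε : Measurable ε)
    (h4 : Integrable (fun ω => (ε ω ⬝ᵥ ε ω) ^ 2) μ) (a : Fin 3) :
    MemLp (fun ω => extendZero (ε ω) a) 2 μ :=
  memLp_two_of_sq_le (by fun_prop : Measurable _).aestronglyMeasurable
    ((integrable_const 1).add h4) fun ω => by
    have := sq_apply_le_dotProduct_self (extendZero (ε ω)) a
    rw [dotProduct_self_extendZero] at this
    simp only [Pi.add_apply]
    nlinarith [sq_nonneg (ε ω ⬝ᵥ ε ω - 1)]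

theorem memLp_add_extendZero_mul [IsFiniteMeasure μ] (hε : Measurable ε)
    (h4 : Integrable (fun ω => (ε ω ⬝ᵥ ε ω) ^ 2) μ) (z : Fin 3 → ℝ) (a b : Fin 3) :
    MemLp (fun ω => (z + extendZero (ε ω)) a * (z + extendZero (ε ω)) b) 2 μ :=
  memLp_two_of_sq_le (by fun_prop) (((integrable_const _).add h4).const_mul 8) fun ω => by
    simpa [dotProduct_self_extendZero] using
      sq_add_apply_mul_add_apply_le z (extendZero (ε ω)) a b

theorem integral_add_extendZero_mul [IsProbabilityMeasure μ] (hε : Measurable ε)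
    (h4 : Integrable (fun ω => (ε ω ⬝ᵥ ε ω) ^ 2) μ) (hmean : ∀ a, ∫ ω, ε ω a ∂μ = 0)
    {σ2 : ℝ} (hcov : ∀ a b, ∫ ω, ε ω a * ε ω b ∂μ = σ2 * (if a = b then 1 else 0))
    (z : Fin 3 → ℝ) (a b : Fin 3) :
    ∫ ω, (z + extendZero (ε ω)) a * (z + extendZero (ε ω)) b ∂μ =
      z a * z b + σ2 * diagonal ![1, 1, 0] a b := by
  have hint : ∀ c, Integrable (fun ω => extendZero (ε ω) c) μ :=
    fun c => (memLp_extendZero_apply hε h4 c).integrable one_le_two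
  have hint2 : Integrable (fun ω => extendZero (ε ω) a * extendZero (ε ω) b) μ := by
    simpa using (memLp_add_extendZero_mul hε h4 0 a b).integrable one_le_two
  calc ∫ ω, (z + extendZero (ε ω)) a * (z + extendZero (ε ω)) b ∂μ
      = ∫ ω, (z a * z b + z a * extendZero (ε ω) b + z b * extendZero (ε ω) a
          + extendZero (ε ω) a * extendZero (ε ω) b) ∂μ := by
        congr 1; funext ω; simp only [Pi.add_apply]; ring
    _ = z a * z b + σ2 * diagonal ![1, 1, 0] a b := by
        rw [integral_add (by fun_prop) hint2, integral_add (by fun_prop) (by fun_prop),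
          integral_add (by fun_prop) (by fun_prop)]
        simp [integral_const_mul, integral_extendZero hmean,
          integral_extendZero_mul_extendZero hcov]

theorem variance_const_mul_add_extendZero_mul_le [IsProbabilityMeasure μ] (hε : Measurable ε)
    (h4 : Integrable (fun ω => (ε ω ⬝ᵥ ε ω) ^ 2) μ) (c : ℝ) (z : Fin 3 → ℝ) (a b : Fin 3) :
    variance (fun ω => c * ((z + extendZero (ε ω)) a * (z + extendZero (ε ω)) b)) μ ≤
      c ^ 2 * (8 * ((z ⬝ᵥ z) ^ 2 + ∫ ω, (ε ω ⬝ᵥ ε ω) ^ 2 ∂μ)) := by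
  rw [variance_const_mul]
  gcongr
  calc _ ≤ ∫ ω, ((z + extendZero (ε ω)) a * (z + extendZero (ε ω)) b) ^ 2 ∂μ :=
        variance_le_expectation_sq (by fun_prop : Measurable _).aestronglyMeasurable
    _ ≤ ∫ ω, 8 * ((z ⬝ᵥ z) ^ 2 + (ε ω ⬝ᵥ ε ω) ^ 2) ∂μ :=
        integral_mono (memLp_add_extendZero_mul hε h4 z a b).integrable_sq
          (((integrable_const _).add h4).const_mul 8) fun ω => by
            simpa [dotProduct_self_extendZero] using
              sq_add_apply_mul_add_apply_le z (extendZero (ε ω)) a b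
    _ = 8 * ((z ⬝ᵥ z) ^ 2 + ∫ ω, (ε ω ⬝ᵥ ε ω) ^ 2 ∂μ) := by
        rw [integral_const_mul, integral_add (integrable_const _) h4]
        simp

theorem memLp_kronOuterEntry_add_extendZero [IsFiniteMeasure μ] (hε : Measurable ε)
    (h4 : Integrable (fun ω => (ε ω ⬝ᵥ ε ω) ^ 2) μ) (y z : Fin 3 → ℝ) (p q : Fin 3 × Fin 3) :
    MemLp (fun ω => kronOuterEntry y (z + extendZero (ε ω)) p q) 2 μ := by
  simpa only [kronOuterEntry_eq] using (memLp_add_extendZero_mul hε h4 z p.2 q.2).const_mul _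

theorem integral_kronOuterEntry_add_extendZero [IsProbabilityMeasure μ] (hε : Measurable ε)
    (h4 : Integrable (fun ω => (ε ω ⬝ᵥ ε ω) ^ 2) μ) (hmean : ∀ a, ∫ ω, ε ω a ∂μ = 0)
    {σ2 : ℝ} (hcov : ∀ a b, ∫ ω, ε ω a * ε ω b ∂μ = σ2 * (if a = b then 1 else 0))
    (y z : Fin 3 → ℝ) (p q : Fin 3 × Fin 3) :
    ∫ ω, kronOuterEntry y (z + extendZero (ε ω)) p q ∂μ =
      kronOuterEntry y z p q + σ2 * (y p.1 * y q.1 * diagonal ![1, 1, 0] p.2 q.2) := by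
  simp only [kronOuterEntry_eq, integral_const_mul,
    integral_add_extendZero_mul hε h4 hmean hcov]
  ring

theorem variance_kronOuterEntry_add_extendZero_le [IsProbabilityMeasure μ] (hε : Measurable ε)
    (h4 : Integrable (fun ω => (ε ω ⬝ᵥ ε ω) ^ 2) μ) {κ : ℝ}
    (hκ : ∫ ω, (ε ω ⬝ᵥ ε ω) ^ 2 ∂μ ≤ κ) {y z : Fin 3 → ℝ} {Cy Cz : ℝ}
    (hy : √(y ⬝ᵥ y) ≤ Cy) (hz : √(z ⬝ᵥ z) ≤ Cz) (p q : Fin 3 × Fin 3) :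
    variance (fun ω => kronOuterEntry y (z + extendZero (ε ω)) p q) μ ≤
      Cy ^ 4 * (8 * (Cz ^ 4 + κ)) := by
  simp only [kronOuterEntry_eq]
  refine (variance_const_mul_add_extendZero_mul_le hε h4 _ z p.2 q.2).trans ?_
  gcongr ?_ * (8 * (?_ + ?_))
  · exact sq_mul_apply_le_of_sqrt_dotProduct_self_le hy p.1 q.1
  · exact sq_dotProduct_self_le_of_sqrt_le hz

end Noise

/-- With bounded deterministic data `y_i^h, z_i^{ho}` and independent mean-zero noises
`ε_i` with covariance `σ²I₂` and uniformly bounded fourth moments, the sample matrix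
`Q_m = (1/m)∑ L_iᵀ z_i^h z_i^{h⊤} L_i` satisfies `Q_m = Q_m^o + σ² S̃_m + O_p(1/√m)`
(deviation measured in Frobenius norm). Here matrices on `ℝ⁹ = ℝ^{3×3}` are indexed by
pairs, with `(L_iᵀ z)_{(j,k)} = y_i^h(j) z(k)`, and `D = diag(1,1,0)`. -/
theorem stmt8 {Ω : Type*} [MeasurableSpace Ω] (μpr : Measure Ω) [IsProbabilityMeasure μpr]
    (y zo : ℕ → Fin 3 → ℝ) (Cy Cz : ℝ)
    (hy : ∀ i, Real.sqrt (y i ⬝ᵥ y i) ≤ Cy)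
    (hz : ∀ i, Real.sqrt (zo i ⬝ᵥ zo i) ≤ Cz)
    (eps : ℕ → Ω → Fin 2 → ℝ) (σ2 κ : ℝ)
    (hmeas : ∀ i, Measurable (eps i))
    (hindep : iIndepFun eps μpr)
    (hmean : ∀ i a, ∫ ω, eps i ω a ∂μpr = 0)
    (hcov : ∀ i a b, ∫ ω, eps i ω a * eps i ω b ∂μpr = σ2 * (if a = b then 1 else 0))
    (hm4int : ∀ i, Integrable (fun ω => (eps i ω ⬝ᵥ eps i ω) ^ 2) μpr)
    (hm4 : ∀ i, ∫ ω, (eps i ω ⬝ᵥ eps i ω) ^ 2 ∂μpr ≤ κ)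
    (epsh : ℕ → Ω → Fin 3 → ℝ) (hepsh : ∀ i ω, epsh i ω = ![eps i ω 0, eps i ω 1, 0])
    (zh : ℕ → Ω → Fin 3 → ℝ) (hzh : ∀ i ω, zh i ω = zo i + epsh i ω)
    (D : Matrix (Fin 3) (Fin 3) ℝ) (hD : D = Matrix.diagonal ![1, 1, 0])
    (Q : ℕ → Ω → Matrix (Fin 3 × Fin 3) (Fin 3 × Fin 3) ℝ)
    (hQ : ∀ m ω p q, Q m ω p q =
      (m : ℝ)⁻¹ * ∑ i ∈ Finset.range m, (y i p.1 * zh i ω p.2) * (y i q.1 * zh i ω q.2))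
    (Qo : ℕ → Matrix (Fin 3 × Fin 3) (Fin 3 × Fin 3) ℝ)
    (hQo : ∀ m p q, Qo m p q =
      (m : ℝ)⁻¹ * ∑ i ∈ Finset.range m, (y i p.1 * zo i p.2) * (y i q.1 * zo i q.2))
    (Sm : ℕ → Matrix (Fin 3 × Fin 3) (Fin 3 × Fin 3) ℝ)
    (hSm : ∀ m p q, Sm m p q =
      (m : ℝ)⁻¹ * ∑ i ∈ Finset.range m, (y i p.1 * y i q.1) * D p.2 q.2) :
    ∀ e : ℝ, 0 < e → ∃ N : ℝ, ∀ m : ℕ,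
      μpr {ω | N / Real.sqrt m <
          Real.sqrt (∑ p : Fin 3 × Fin 3, ∑ q : Fin 3 × Fin 3,
            (Q m ω p q - Qo m p q - σ2 * Sm m p q) ^ 2)}
        < ENNReal.ofReal e := by
  intro e he
  subst hD
  have hQX : ∀ m ω p q, Q m ω p q =
      (m : ℝ)⁻¹ * ∑ i ∈ Finset.range m, kronOuterEntry (y i) (zo i + extendZero (eps i ω)) p q :=
    fun m ω p q => by simp only [hQ, hzh, hepsh]; rfl
  have hXmemLp : ∀ p q i, MemLp (fun ω => kronOuterEntry (y i) (zo i + extendZero (eps i ω)) p q)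
      2 μpr := fun p q i => memLp_kronOuterEntry_add_extendZero (hmeas i) (hm4int i) _ _ p q
  have hQmemLp : ∀ m p q, MemLp (fun ω => Q m ω p q) 2 μpr := fun m p q => by
    simp only [hQX]
    exact (memLp_finsetSum _ fun i _ => hXmemLp p q i).const_mul _
  have hQmean : ∀ m p q, ∫ ω, Q m ω p q ∂μpr = Qo m p q + σ2 * Sm m p q := fun m p q => by
    simp only [hQX]
    rw [integral_const_mul,
      integral_finsetSum _ fun i _ => (hXmemLp p q i).integrable one_le_two, hQo, hSm,
      mul_left_comm σ2, ← mul_add, Finset.mul_sum _ _ σ2, ← Finset.sum_add_distrib]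
    simp only [integral_kronOuterEntry_add_extendZero (hmeas _) (hm4int _) (hmean _) (hcov _)]
    rfl
  have hQvar : ∀ m p q, variance (fun ω => Q m ω p q) μpr ≤
      Cy ^ 4 * (8 * (Cz ^ 4 + κ)) / m := fun m p q => by
    simp only [hQX]
    refine variance_average_le (hXmemLp p q) (fun i j hij => ?_)
      (fun i => variance_kronOuterEntry_add_extendZero_le (hmeas i) (hm4int i) (hm4 i)
        (hy i) (hz i) p q) m
    exact (hindep.comp (fun i v => kronOuterEntry (y i) (zo i + extendZero v) p q)
      fun i => by unfold kronOuterEntry; fun_prop).indepFun hij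
  obtain ⟨N, hN⟩ := exists_measure_lt_sqrt_sum_sq_sub_integral_lt hQmemLp hQvar he
  refine ⟨N, fun m => ?_⟩
  rcases Nat.eq_zero_or_pos m with rfl | hm
  · simpa [hQ, hQo, hSm] using ENNReal.ofReal_pos.2 he
  · simpa only [hQmean, sub_sub] using hN m hm
end

section
/- Let R and S be real symmetric n×n matrices with R positive semidefinite and singular (0 is an eigenvalue of R), let σ² > 0, and suppose Q = R + σ²S is positive definite. For a symmetric positive definite matrix P define λ*(P) = sup_{‖v‖=1} (vᵀSv)/(vᵀPv). Then λ*(Q) = 1/σ², and there exist constants δ > 0 and C > 0 such that for every symmetric matrix Δ with ‖Δ‖ ≤ δ, the matrix Q + Δ is positive definite, λ*(Q+Δ) > 0, and |1/λ*(Q+Δ) − σ²| ≤ C‖Δ‖. (This Lipschitz stability of the noise-variance functional P ↦ 1/λ*(P) at P = Q yields the √m-convergence rate of the noise variance estimator.) -/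
open Matrix
open scoped Matrix.Norms.L2Operator

/-- `lamStar S P = sup_{‖v‖=1} (vᵀSv)/(vᵀPv)`; for `P` symmetric positive definite this
is the largest eigenvalue of `P⁻¹S`. -/
noncomputable def lamStar {n : ℕ} (S P : Matrix (Fin n) (Fin n) ℝ) : ℝ :=
  sSup {r | ∃ v : Fin n → ℝ, v ⬝ᵥ v = 1 ∧ r = (v ⬝ᵥ S.mulVec v) / (v ⬝ᵥ P.mulVec v)}

/-!
Since `R ⪰ 0`, every `v` satisfies `σ² vᵀSv ≤ vᵀQv`, with equality at a null vector `u` of `R`;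
hence `1/σ²` bounds the quotient `vᵀSv / vᵀQv` and is attained at `u`. If `μ > 0` is a
coercivity constant of `Q`, a perturbation with `‖Δ‖ = d < μ` changes each `vᵀQv ≥ μ` by at
most `d`, which squeezes `λ*(Q+Δ)` between `μ / (σ²(μ+d))` and `μ / (σ²(μ-d))`, i.e.
`|1/λ*(Q+Δ) - σ²| ≤ σ² d / μ`.
-/

section Quadratic

variable {ι : Type*} [Fintype ι]

lemma EuclideanSpace.norm_toLp_sq (v : ι → ℝ) :
    ‖(WithLp.toLp 2 v : EuclideanSpace ℝ ι)‖ ^ 2 = v ⬝ᵥ v := by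
  rw [← real_inner_self_eq_norm_sq, EuclideanSpace.inner_toLp_toLp, star_trivial]

lemma Matrix.abs_dotProduct_mulVec_le [DecidableEq ι] (A : Matrix ι ι ℝ) (v : ι → ℝ) :
    |v ⬝ᵥ A *ᵥ v| ≤ ‖A‖ * (v ⬝ᵥ v) := by
  set x : EuclideanSpace ℝ ι := WithLp.toLp 2 v
  have hAx : ‖(WithLp.toLp 2 (A *ᵥ v) : EuclideanSpace ℝ ι)‖ ≤ ‖A‖ * ‖x‖ := A.l2_opNorm_mulVec x
  calc |v ⬝ᵥ A *ᵥ v| = |inner ℝ x (WithLp.toLp 2 (A *ᵥ v))| := by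
        rw [EuclideanSpace.inner_toLp_toLp, star_trivial, dotProduct_comm]
    _ ≤ ‖x‖ * (‖A‖ * ‖x‖) := (abs_real_inner_le_norm _ _).trans (by gcongr)
    _ = ‖A‖ * (v ⬝ᵥ v) := by rw [← EuclideanSpace.norm_toLp_sq]; ring

lemma Matrix.PosDef.exists_pos_mul_dotProduct_self_le {Q : Matrix ι ι ℝ} (hQ : Q.PosDef) :
    ∃ μ > 0, ∀ v : ι → ℝ, μ * (v ⬝ᵥ v) ≤ v ⬝ᵥ Q *ᵥ v := by
  have hcont : Continuous fun x : EuclideanSpace ℝ ι => x.ofLp ⬝ᵥ Q *ᵥ x.ofLp := by fun_prop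
  obtain ⟨μ, hμ, hμle⟩ := (isCompact_sphere (0 : EuclideanSpace ℝ ι) 1).exists_forall_le'
    hcont.continuousOn (a := 0) fun x hx => by
      have hx0 : x.ofLp ≠ 0 := by
        rw [Ne, WithLp.ofLp_eq_zero]
        rintro rfl
        simp at hx
      simpa using hQ.dotProduct_mulVec_pos hx0
  refine ⟨μ, hμ, fun v => ?_⟩
  rcases eq_or_ne v 0 with rfl | hv
  · simp
  set x : EuclideanSpace ℝ ι := WithLp.toLp 2 v
  have hx : 0 < ‖x‖ := by simpa [x] using hv
  have hunit := hμle (‖x‖⁻¹ • x) (by simp [norm_smul, hx.ne'])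
  simp only [WithLp.ofLp_smul, mulVec_smul, smul_dotProduct, dotProduct_smul,
    smul_eq_mul] at hunit
  rw [le_inv_mul_iff₀ hx, le_inv_mul_iff₀ hx] at hunit
  calc μ * (v ⬝ᵥ v) = ‖x‖ * (‖x‖ * μ) := by rw [← EuclideanSpace.norm_toLp_sq]; ring
    _ ≤ v ⬝ᵥ Q *ᵥ v := hunit

lemma exists_smul_dotProduct_self_eq_one {v : ι → ℝ} (hv : v ≠ 0) :
    ∃ c : ℝ, (c • v) ⬝ᵥ (c • v) = 1 := by
  refine ⟨‖(WithLp.toLp 2 v : EuclideanSpace ℝ ι)‖⁻¹, ?_⟩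
  rw [← EuclideanSpace.norm_toLp_sq, WithLp.toLp_smul, norm_smul, norm_inv, norm_norm,
    inv_mul_cancel₀ (by simpa using hv), one_pow]

lemma Matrix.posDef_add_of_norm_lt [DecidableEq ι] {Q Δ : Matrix ι ι ℝ} {μ : ℝ}
    (hQ : Q.IsHermitian) (hΔ : Δ.IsHermitian) (hμ : ∀ v, μ * (v ⬝ᵥ v) ≤ v ⬝ᵥ Q *ᵥ v)
    (hΔμ : ‖Δ‖ < μ) : (Q + Δ).PosDef := by
  refine .of_dotProduct_mulVec_pos (hQ.add hΔ) fun v hv => ?_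
  have hvv : 0 < v ⬝ᵥ v := by simpa using dotProduct_self_star_pos_iff.mpr hv
  have hΔv := (abs_le.mp (Δ.abs_dotProduct_mulVec_le v)).1
  rw [star_trivial, add_mulVec, dotProduct_add]
  nlinarith [hμ v]

end Quadratic

section Rayleigh

variable {n : ℕ}

noncomputable def genRayleigh (S P : Matrix (Fin n) (Fin n) ℝ) (v : Fin n → ℝ) : ℝ :=
  (v ⬝ᵥ S *ᵥ v) / (v ⬝ᵥ P *ᵥ v)

variable {S P : Matrix (Fin n) (Fin n) ℝ} {B : ℝ} {u : Fin n → ℝ}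

lemma lamStar_le (hu : u ⬝ᵥ u = 1) (hB : ∀ v, v ⬝ᵥ v = 1 → genRayleigh S P v ≤ B) :
    lamStar S P ≤ B :=
  csSup_le ⟨_, u, hu, rfl⟩ (by rintro _ ⟨v, hv, rfl⟩; exact hB v hv)

lemma genRayleigh_le_lamStar (hu : u ⬝ᵥ u = 1) (hB : ∀ v, v ⬝ᵥ v = 1 → genRayleigh S P v ≤ B) :
    genRayleigh S P u ≤ lamStar S P :=
  le_csSup ⟨B, by rintro _ ⟨v, hv, rfl⟩; exact hB v hv⟩ ⟨u, hu, rfl⟩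

end Rayleigh

section Perturbation

variable {n : ℕ} {R S Q Δ : Matrix (Fin n) (Fin n) ℝ} {σ2 μ : ℝ}

lemma genRayleigh_add_le (hRpsd : R.PosSemidef) (hQ : Q = R + σ2 • S) (hσ2 : 0 < σ2)
    (hμ : ∀ v, μ * (v ⬝ᵥ v) ≤ v ⬝ᵥ Q *ᵥ v) (hΔμ : ‖Δ‖ < μ) {v : Fin n → ℝ} (hv : v ⬝ᵥ v = 1) :
    genRayleigh S (Q + Δ) v ≤ μ / (σ2 * (μ - ‖Δ‖)) := by
  have hR : 0 ≤ v ⬝ᵥ R *ᵥ v := by simpa using hRpsd.dotProduct_mulVec_nonneg v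
  have hQv : v ⬝ᵥ Q *ᵥ v = v ⬝ᵥ R *ᵥ v + σ2 * (v ⬝ᵥ S *ᵥ v) := by
    rw [hQ, add_mulVec, dotProduct_add, smul_mulVec, dotProduct_smul, smul_eq_mul]
  have hμv : μ ≤ v ⬝ᵥ Q *ᵥ v := by simpa [hv] using hμ v
  have hΔv := abs_le.mp <| by simpa [hv] using Δ.abs_dotProduct_mulVec_le v
  have hden : 0 < v ⬝ᵥ Q *ᵥ v + v ⬝ᵥ Δ *ᵥ v := by linarith
  unfold genRayleigh
  rw [add_mulVec, dotProduct_add, div_le_div_iff₀ hden (by nlinarith)]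
  nlinarith [mul_nonneg hR (sub_nonneg.mpr hΔμ.le),
    mul_nonneg (sub_nonneg.mpr hμv) (norm_nonneg Δ),
    mul_nonneg (hΔμ.le.trans' (norm_nonneg Δ)) (neg_le_iff_add_nonneg.mp hΔv.1)]

lemma le_genRayleigh_add (hQ : Q = R + σ2 • S) (hσ2 : 0 < σ2)
    (hμ : ∀ v, μ * (v ⬝ᵥ v) ≤ v ⬝ᵥ Q *ᵥ v) (hμ0 : 0 < μ) (hΔμ : ‖Δ‖ < μ)
    {u : Fin n → ℝ} (hu : u ⬝ᵥ u = 1) (hRu : R *ᵥ u = 0) :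
    μ / (σ2 * (μ + ‖Δ‖)) ≤ genRayleigh S (Q + Δ) u := by
  have hQu : u ⬝ᵥ Q *ᵥ u = σ2 * (u ⬝ᵥ S *ᵥ u) := by
    rw [hQ, add_mulVec, hRu, zero_add, smul_mulVec, dotProduct_smul, smul_eq_mul]
  have hμu : μ ≤ u ⬝ᵥ Q *ᵥ u := by simpa [hu] using hμ u
  have hΔu := abs_le.mp <| by simpa [hu] using Δ.abs_dotProduct_mulVec_le u
  unfold genRayleigh
  rw [add_mulVec, dotProduct_add, div_le_div_iff₀ (by positivity) (by linarith)]
  nlinarith [mul_nonneg (sub_nonneg.mpr hμu) (norm_nonneg Δ),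
    mul_nonneg hμ0.le (sub_nonneg.mpr hΔu.2)]

theorem lamStar_add_pos_and_abs_inv_sub_le (hRpsd : R.PosSemidef) (hQ : Q = R + σ2 • S)
    (hσ2 : 0 < σ2) (hμ : ∀ v, μ * (v ⬝ᵥ v) ≤ v ⬝ᵥ Q *ᵥ v) (hμ0 : 0 < μ) (hΔμ : ‖Δ‖ < μ)
    {u : Fin n → ℝ} (hu : u ⬝ᵥ u = 1) (hRu : R *ᵥ u = 0) :
    0 < lamStar S (Q + Δ) ∧ |1 / lamStar S (Q + Δ) - σ2| ≤ σ2 / μ * ‖Δ‖ := by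
  have hbound := fun v (hv : v ⬝ᵥ v = 1) => genRayleigh_add_le hRpsd hQ hσ2 hμ hΔμ hv
  have hL := (le_genRayleigh_add hQ hσ2 hμ hμ0 hΔμ hu hRu).trans
    (genRayleigh_le_lamStar hu hbound)
  have hU := lamStar_le hu hbound
  have hpos : 0 < lamStar S (Q + Δ) := hL.trans_lt' (by positivity)
  have hμΔ : 0 < μ - ‖Δ‖ := sub_pos.mpr hΔμ
  refine ⟨hpos, abs_le.mpr ⟨?_, ?_⟩⟩
  · have := one_div_le_one_div_of_le hpos hU
    rw [one_div_div] at this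
    calc -(σ2 / μ * ‖Δ‖) = σ2 * (μ - ‖Δ‖) / μ - σ2 := by field_simp; ring
      _ ≤ 1 / lamStar S (Q + Δ) - σ2 := by linarith
  · have := one_div_le_one_div_of_le (by positivity) hL
    rw [one_div_div] at this
    calc 1 / lamStar S (Q + Δ) - σ2 ≤ σ2 * (μ + ‖Δ‖) / μ - σ2 := by linarith
      _ = σ2 / μ * ‖Δ‖ := by field_simp; ring

end Perturbation

theorem stmt12_general (n : ℕ) (R S : Matrix (Fin n) (Fin n) ℝ)
    (hRpsd : R.PosSemidef)
    (hRsing : ∃ v : Fin n → ℝ, v ≠ 0 ∧ R.mulVec v = 0)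
    (σ2 : ℝ) (hσ2 : 0 < σ2)
    (Q : Matrix (Fin n) (Fin n) ℝ) (hQ : Q = R + σ2 • S) (hQpd : Q.PosDef) :
    lamStar S Q = 1 / σ2 ∧
    ∃ δ > (0 : ℝ), ∃ C > (0 : ℝ),
      ∀ Δ : Matrix (Fin n) (Fin n) ℝ, Δ.IsSymm → ‖Δ‖ ≤ δ →
        (Q + Δ).PosDef ∧ 0 < lamStar S (Q + Δ) ∧
        |1 / lamStar S (Q + Δ) - σ2| ≤ C * ‖Δ‖ := by
  obtain ⟨v, hv, hRv⟩ := hRsing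
  obtain ⟨c, hu⟩ := exists_smul_dotProduct_self_eq_one hv
  have hRu : R *ᵥ (c • v) = 0 := by rw [mulVec_smul, hRv, smul_zero]
  obtain ⟨μ, hμ0, hμ⟩ := hQpd.exists_pos_mul_dotProduct_self_le
  have hstable {Δ : Matrix (Fin n) (Fin n) ℝ} (hΔμ : ‖Δ‖ < μ) :=
    lamStar_add_pos_and_abs_inv_sub_le hRpsd hQ hσ2 hμ hμ0 hΔμ hu hRu
  refine ⟨?_, μ / 2, by positivity, σ2 / μ, by positivity, fun Δ hΔ hΔδ => ?_⟩
  · have habs := (hstable (Δ := 0) (by simpa using hμ0)).2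
    rw [add_zero, norm_zero, mul_zero, abs_nonpos_iff, sub_eq_zero] at habs
    rw [← habs, one_div_one_div]
  · have hΔμ : ‖Δ‖ < μ := by linarith
    exact ⟨posDef_add_of_norm_lt hQpd.isHermitian (isHermitian_iff_isSymm.mpr hΔ) hμ hΔμ,
      hstable hΔμ⟩

/-- Lipschitz stability of the noise-variance functional `P ↦ 1/λ*(P)` at `P = Q`:
if `R` is symmetric PSD and singular, `σ² > 0`, and `Q = R + σ²S` is positive definite,
then `λ*(Q) = 1/σ²`, and for all small symmetric perturbations `Δ` (in the operator
norm), `Q + Δ` is positive definite, `λ*(Q+Δ) > 0`, and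
`|1/λ*(Q+Δ) − σ²| ≤ C‖Δ‖`. -/
theorem stmt12 (n : ℕ) (R S : Matrix (Fin n) (Fin n) ℝ)
    (hRsymm : R.IsSymm) (hSsymm : S.IsSymm)
    (hRpsd : R.PosSemidef)
    (hRsing : ∃ v : Fin n → ℝ, v ≠ 0 ∧ R.mulVec v = 0)
    (σ2 : ℝ) (hσ2 : 0 < σ2)
    (Q : Matrix (Fin n) (Fin n) ℝ) (hQ : Q = R + σ2 • S) (hQpd : Q.PosDef) :
    lamStar S Q = 1 / σ2 ∧
    ∃ δ > (0 : ℝ), ∃ C > (0 : ℝ),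
      ∀ Δ : Matrix (Fin n) (Fin n) ℝ, Δ.IsSymm → ‖Δ‖ ≤ δ →
        (Q + Δ).PosDef ∧ 0 < lamStar S (Q + Δ) ∧
        |1 / lamStar S (Q + Δ) - σ2| ≤ C * ‖Δ‖ :=
  stmt12_general n R S hRpsd hRsing σ2 hσ2 Q hQ hQpd
end
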